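/- Let H be a connected r-uniform hypergraph on n vertices with diameter D and spectral radius ρ, and let H' be a proper sub-hypergraph of H. Then ρ(H) − ρ(H') ≥ min{ r/(n·ρ^{r(r−1)(D+1)}), 1/(n·ρ^{rD}·(ρ^{r−1} + r − 1)) }. -/

import Mathlib

/-!
Let `e₀` be an edge of `H` missing from `H'` and `x` a Perron vector of `H - e₀`. Some coordinate
has `x_w^r ≥ 1/n`. A shortest walk from `w` to `e₀` has length at most `D` and does not use `e₀`,
and along it the eigen-equations of `x` let `x^r` drop by at most a factor `ρ^r` per step, so some
`a ∈ e₀` has `x_a^r ≥ 1/(n ρ^{rD})`. On the other hand, writing `x = y t` with `y` the (positive)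
Perron vector of `H` and applying AM-GM edge by edge gives
`ρ(H - e₀) ≤ ρ(H) - ∑_{j ∈ e₀} x_j^r / ρ^{r-1}`. Hence `ρ(H) - ρ(H') ≥ 1/(n ρ^{rD} ρ^{r-1})`,
which is at least the second term of the minimum.
-/

/-- `hconn E k u v` : there is a walk of length `k` from `u` to `v` in the hypergraph
with edge set `E`, i.e. an alternating sequence of vertices and edges where consecutive
vertices both lie in the connecting edge. -/
def hconn {n : ℕ} (E : Finset (Finset (Fin n))) : ℕ → Fin n → Fin n → Prop
  | 0, u, v => u = v
  | k + 1, u, v => ∃ e ∈ E, ∃ w ∈ e, u ∈ e ∧ hconn E k w v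

/-- Distance between two vertices of a hypergraph: minimum length of a connecting walk. -/
noncomputable def hdist {n : ℕ} (E : Finset (Finset (Fin n))) (u v : Fin n) : ℕ :=
  sInf {k | hconn E k u v}

/-- Diameter of a hypergraph: maximum distance between two vertices. -/
noncomputable def hdiam {n : ℕ} (E : Finset (Finset (Fin n))) : ℕ :=
  sSup {d | ∃ u v : Fin n, hdist E u v = d}

/-- A hypergraph is connected if any two vertices are joined by a walk. -/
def HConnected {n : ℕ} (E : Finset (Finset (Fin n))) : Prop :=
  ∀ u v : Fin n, ∃ k, hconn E k u v

/-- Degree of a vertex: the number of edges containing it. -/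
def hdeg {n : ℕ} (E : Finset (Finset (Fin n))) (v : Fin n) : ℕ :=
  (E.filter (fun e => v ∈ e)).card

/-- The spectral radius of an `r`-uniform hypergraph with edge set `E`, via the
variational characterization `ρ(A) = max { x^T (A x^{r-1}) : x ≥ 0, ∑ x_i^r = 1 }`,
where `x^T (A x^{r-1}) = r ∑_{e ∈ E} ∏_{j ∈ e} x_j`. -/
noncomputable def specRad {n : ℕ} (r : ℕ) (E : Finset (Finset (Fin n))) : ℝ :=
  sSup {t | ∃ x : Fin n → ℝ, (∀ i, 0 ≤ x i) ∧ (∑ i, x i ^ r = 1) ∧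
    t = r * ∑ e ∈ E, ∏ j ∈ e, x j}

open Finset Filter Topology

section Defs

variable {n : ℕ}

noncomputable def tensorForm (r : ℕ) (F : Finset (Finset (Fin n))) (x : Fin n → ℝ) : ℝ :=
  r * ∑ e ∈ F, ∏ j ∈ e, x j

def nonnegSphere (n r : ℕ) : Set (Fin n → ℝ) :=
  {x | (∀ i, 0 ≤ x i) ∧ ∑ i, x i ^ r = 1}

def IsUniform (r : ℕ) (F : Finset (Finset (Fin n))) : Prop :=
  ∀ e ∈ F, e.card = r

structure IsPerronVector (r : ℕ) (F : Finset (Finset (Fin n))) (x : Fin n → ℝ) : Prop where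
  mem : x ∈ nonnegSphere n r
  tensorForm_eq : tensorForm r F x = specRad r F

end Defs

section SpecRad

variable {n r : ℕ} {F G : Finset (Finset (Fin n))} {x z : Fin n → ℝ}

lemma specRad_eq_sSup_image (r : ℕ) (F : Finset (Finset (Fin n))) :
    specRad r F = sSup (tensorForm r F '' nonnegSphere n r) := by
  unfold specRad
  congr 1
  ext t
  simp [nonnegSphere, tensorForm, eq_comm, and_assoc]

lemma le_one_of_mem_nonnegSphere (hr : 0 < r) (hx : x ∈ nonnegSphere n r) (i : Fin n) :
    x i ≤ 1 :=
  (pow_le_one_iff_of_nonneg (hx.1 i) hr.ne').mp <|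
    hx.2 ▸ single_le_sum (fun j _ => pow_nonneg (hx.1 j) r) (mem_univ i)

lemma isCompact_nonnegSphere (hr : 0 < r) : IsCompact (nonnegSphere n r) := by
  have hclosed : IsClosed (nonnegSphere n r) := by
    have : nonnegSphere n r = (⋂ i, {x | 0 ≤ x i}) ∩ {x | ∑ i, x i ^ r = 1} := by
      ext x
      simp [nonnegSphere]
    rw [this]
    exact (isClosed_iInter fun i => isClosed_le continuous_const (continuous_apply i)).inter
      (isClosed_eq (by fun_prop) continuous_const)
  refine (isCompact_univ_pi fun _ => isCompact_Icc (a := (0 : ℝ)) (b := 1)).of_isClosed_subset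
    hclosed fun x hx i _ => ⟨hx.1 i, le_one_of_mem_nonnegSphere hr hx i⟩

lemma nonnegSphere_nonempty (hr : 0 < r) (hn : 0 < n) : (nonnegSphere n r).Nonempty := by
  refine ⟨Pi.single ⟨0, hn⟩ 1, fun i => ?_, ?_⟩
  · by_cases h : i = ⟨0, hn⟩ <;> simp [h]
  · simp [Pi.single_apply, apply_ite (· ^ r), zero_pow hr.ne']

lemma continuous_tensorForm (r : ℕ) (F : Finset (Finset (Fin n))) :
    Continuous (tensorForm r F) := by
  unfold tensorForm
  fun_prop

lemma tensorForm_nonneg (hx : ∀ i, 0 ≤ x i) : 0 ≤ tensorForm r F x :=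
  mul_nonneg (by positivity) (sum_nonneg fun _ _ => prod_nonneg fun j _ => hx j)

lemma tensorForm_mono (hFG : F ⊆ G) (hx : ∀ i, 0 ≤ x i) : tensorForm r F x ≤ tensorForm r G x :=
  mul_le_mul_of_nonneg_left
    (sum_le_sum_of_subset_of_nonneg hFG fun _ _ _ => prod_nonneg fun j _ => hx j) r.cast_nonneg

lemma tensorForm_le_specRad (hr : 0 < r) (hx : x ∈ nonnegSphere n r) :
    tensorForm r F x ≤ specRad r F := by
  rw [specRad_eq_sSup_image]
  exact le_csSup ((isCompact_nonnegSphere hr).image (continuous_tensorForm r F)).bddAbove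
    (Set.mem_image_of_mem _ hx)

lemma specRad_nonneg : 0 ≤ specRad r F :=
  Real.sSup_nonneg <| by
    rintro _ ⟨x, hx, -, rfl⟩
    exact tensorForm_nonneg hx

lemma specRad_mono (hr : 0 < r) (hFG : F ⊆ G) : specRad r F ≤ specRad r G := by
  rw [specRad_eq_sSup_image r F]
  refine Real.sSup_le ?_ specRad_nonneg
  rintro _ ⟨x, hx, rfl⟩
  exact (tensorForm_mono hFG hx.1).trans (tensorForm_le_specRad hr hx)

lemma exists_isPerronVector (hr : 0 < r) (hn : 0 < n) (F : Finset (Finset (Fin n))) :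
    ∃ x, IsPerronVector r F x := by
  have hK := (isCompact_nonnegSphere hr).image (continuous_tensorForm r F)
  obtain ⟨x, hx, hxF⟩ := hK.sSup_mem ((nonnegSphere_nonempty hr hn).image _)
  exact ⟨x, hx, by rw [hxF, specRad_eq_sSup_image]⟩

lemma IsUniform.mono (hG : IsUniform r G) (hFG : F ⊆ G) : IsUniform r F :=
  fun e he => hG e (hFG he)

lemma IsUniform.nonempty_of_mem (hr : 0 < r) (hF : IsUniform r F) {e : Finset (Fin n)}
    (he : e ∈ F) : e.Nonempty :=
  card_pos.1 (hF e he ▸ hr)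

lemma IsUniform.tensorForm_const_mul (hF : IsUniform r F) (c : ℝ) (x : Fin n → ℝ) :
    tensorForm r F (fun i => c * x i) = c ^ r * tensorForm r F x := by
  have h : ∀ e ∈ F, ∏ j ∈ e, c * x j = c ^ r * ∏ j ∈ e, x j := fun e he => by
    rw [prod_mul_distrib, prod_const, hF e he]
  unfold tensorForm
  rw [sum_congr rfl h, ← mul_sum, mul_left_comm]

lemma IsUniform.tensorForm_le_specRad_mul (hr : 0 < r) (hF : IsUniform r F)
    (hz : ∀ i, 0 ≤ z i) : tensorForm r F z ≤ specRad r F * ∑ i, z i ^ r := by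
  set C := ∑ i, z i ^ r
  rcases (sum_nonneg fun i _ => pow_nonneg (hz i) r : 0 ≤ C).eq_or_lt with hC | hC
  · have hz0 : z = fun i => 0 * z i := by
      ext i
      rw [zero_mul]
      exact pow_eq_zero_iff hr.ne' |>.mp <|
        (sum_eq_zero_iff_of_nonneg fun j _ => pow_nonneg (hz j) r).mp hC.symm i (mem_univ i)
    rw [show C = 0 from hC.symm, mul_zero, hz0, hF.tensorForm_const_mul, zero_pow hr.ne', zero_mul]
  · set c := C⁻¹ ^ (r⁻¹ : ℝ)
    have hcr : c ^ r = C⁻¹ := Real.rpow_inv_natCast_pow (inv_nonneg.2 hC.le) hr.ne'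
    have hc : 0 ≤ c := Real.rpow_nonneg (inv_nonneg.2 hC.le) _
    have hmem : (fun i => c * z i) ∈ nonnegSphere n r := by
      refine ⟨fun i => mul_nonneg hc (hz i), ?_⟩
      simp_rw [mul_pow, ← mul_sum, hcr]
      exact inv_mul_cancel₀ hC.ne'
    have := tensorForm_le_specRad (F := F) hr hmem
    rw [hF.tensorForm_const_mul, hcr, inv_mul_le_iff₀ hC] at this
    linarith

lemma IsUniform.one_le_specRad (hr : 0 < r) (hF : IsUniform r F) {e : Finset (Fin n)}
    (he : e ∈ F) : 1 ≤ specRad r F := by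
  classical
  set z : Fin n → ℝ := fun i => if i ∈ e then 1 else 0
  have hz : ∀ i, 0 ≤ z i := fun i => by by_cases h : i ∈ e <;> simp [z, h]
  have hsum : ∑ i, z i ^ r = r := by
    simp [z, apply_ite (· ^ r), zero_pow hr.ne', hF e he]
  have hr_le : (r : ℝ) ≤ tensorForm r F z := by
    have hprod : ∏ j ∈ e, z j = 1 := prod_eq_one fun j hj => by simp [z, hj]
    calc (r : ℝ) = r * ∏ j ∈ e, z j := by rw [hprod, mul_one]
      _ ≤ tensorForm r F z := mul_le_mul_of_nonneg_left
        (single_le_sum (f := fun f => ∏ j ∈ f, z j) (fun f _ => prod_nonneg fun j _ => hz j) he)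
        (by positivity)
  have := hr_le.trans (hF.tensorForm_le_specRad_mul hr hz)
  rw [hsum] at this
  exact le_of_mul_le_mul_right (by simpa using this) (by exact_mod_cast hr)

lemma tensorForm_mul_mulSingle (x : Fin n → ℝ) (u : Fin n) (c : ℝ) :
    tensorForm r F (x * Pi.mulSingle u c : Fin n → ℝ) =
      tensorForm r F x + r * ((c - 1) * ∑ f ∈ F with u ∈ f, ∏ j ∈ f, x j) := by
  have h : ∀ f ∈ F, ∏ j ∈ f, (x * Pi.mulSingle u c : Fin n → ℝ) j =
      ∏ j ∈ f, x j + (c - 1) * if u ∈ f then ∏ j ∈ f, x j else 0 := fun f _ => by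
    rw [prod_congr rfl fun j _ => Pi.mul_apply x (Pi.mulSingle u c) j, prod_mul_distrib,
      prod_pi_mulSingle']
    split_ifs <;> ring
  unfold tensorForm
  rw [sum_congr rfl h, sum_add_distrib, ← mul_sum, sum_filter]
  ring

lemma sum_mul_mulSingle_pow (x : Fin n → ℝ) (u : Fin n) (c : ℝ) :
    ∑ i, (x * Pi.mulSingle u c : Fin n → ℝ) i ^ r = ∑ i, x i ^ r + (c ^ r - 1) * x u ^ r := by
  have h : ∀ i, (x * Pi.mulSingle u c : Fin n → ℝ) i ^ r =
      x i ^ r + (Pi.single u ((c ^ r - 1) * x u ^ r) : Fin n → ℝ) i := by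
    intro i
    rcases eq_or_ne i u with rfl | hi
    · simp only [Pi.mul_apply, Pi.mulSingle_eq_same, Pi.single_eq_same]
      ring
    · simp [hi]
  simp only [h, sum_add_distrib, sum_pi_single', mem_univ, if_true]

end SpecRad

namespace IsPerronVector

variable {n r : ℕ} {F : Finset (Finset (Fin n))} {x : Fin n → ℝ}

/-- The eigen-equation `(A x^{r-1})_u = ρ x_u^{r-1}`, multiplied by `x_u`; it holds for every
`u`, including those with `x_u = 0`. -/
lemma sum_filter_prod_eq (hr : 0 < r) (hF : IsUniform r F) (hx : IsPerronVector r F x)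
    (u : Fin n) : ∑ f ∈ F with u ∈ f, ∏ j ∈ f, x j = specRad r F * x u ^ r := by
  set W := ∑ f ∈ F with u ∈ f, ∏ j ∈ f, x j
  set ρ := specRad r F
  have hpert : ∀ c : ℝ, 0 ≤ c → r * ((c - 1) * W) ≤ ρ * ((c ^ r - 1) * x u ^ r) := by
    intro c hc
    have hnonneg : ∀ i, 0 ≤ (x * Pi.mulSingle u c : Fin n → ℝ) i := fun i => by
      rcases eq_or_ne i u with rfl | hi
      · simpa using mul_nonneg (hx.mem.1 i) hc
      · simpa [hi] using hx.mem.1 i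
    have := hF.tensorForm_le_specRad_mul hr hnonneg
    rw [tensorForm_mul_mulSingle, sum_mul_mulSingle_pow, hx.mem.2, hx.tensorForm_eq] at this
    linarith
  have hmin : IsLocalMin (fun c : ℝ => ρ * ((c ^ r - 1) * x u ^ r) - r * ((c - 1) * W)) 1 :=
    eventually_of_mem (Ioi_mem_nhds one_pos) fun c hc => by
      simpa using sub_nonneg.2 (hpert c (le_of_lt hc))
  have hderiv : HasDerivAt (fun c : ℝ => ρ * ((c ^ r - 1) * x u ^ r) - r * ((c - 1) * W))
      (ρ * ((r * 1 ^ (r - 1) * 1) * x u ^ r) - r * (1 * W)) 1 := by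
    have := (((hasDerivAt_id (1 : ℝ)).pow r).sub_const 1).mul_const (x u ^ r)
    exact (this.const_mul ρ).sub (((hasDerivAt_id (1 : ℝ)).sub_const 1).mul_const W |>.const_mul _)
  have hrW := hmin.hasDerivAt_eq_zero hderiv
  have hr' : (r : ℝ) ≠ 0 := by exact_mod_cast hr.ne'
  apply mul_left_cancel₀ hr'
  linear_combination -hrW

lemma prod_le (hr : 0 < r) (hF : IsUniform r F) (hx : IsPerronVector r F x)
    {f : Finset (Fin n)} (hf : f ∈ F) {j : Fin n} (hj : j ∈ f) :
    ∏ i ∈ f, x i ≤ specRad r F * x j ^ r :=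
  hx.sum_filter_prod_eq hr hF j ▸ single_le_sum (f := fun g => ∏ i ∈ g, x i)
    (fun _ _ => prod_nonneg fun i _ => hx.mem.1 i) (mem_filter.2 ⟨hf, hj⟩)

lemma pow_le_mul_prod (hr : 0 < r) (hF : IsUniform r F) (hx : IsPerronVector r F x)
    {f : Finset (Fin n)} (hf : f ∈ F) (hpos : ∀ i ∈ f, 0 < x i) {v : Fin n} (hv : v ∈ f) :
    x v ^ r ≤ specRad r F ^ (r - 1) * ∏ i ∈ f, x i := by
  set ρ := specRad r F
  set p := ∏ i ∈ f, x i
  have hp : 0 < p := prod_pos hpos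
  have hcard : (f.erase v).card = r - 1 := by rw [card_erase_of_mem hv, hF f hf]
  have hprod : ∏ _j ∈ f.erase v, p ≤ ∏ j ∈ f.erase v, ρ * x j ^ r :=
    prod_le_prod (fun _ _ => hp.le) fun j hj => hx.prod_le hr hF hf (mem_of_mem_erase hj)
  have key : p ^ (r - 1) * x v ^ r ≤ p ^ (r - 1) * (ρ ^ (r - 1) * p) :=
    calc p ^ (r - 1) * x v ^ r ≤ (∏ j ∈ f.erase v, ρ * x j ^ r) * x v ^ r := by
          rw [← hcard, ← prod_const]
          exact mul_le_mul_of_nonneg_right hprod (pow_nonneg (hx.mem.1 v) r)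
      _ = ρ ^ (r - 1) * p ^ r := by
          rw [prod_mul_distrib, prod_const, hcard, prod_pow, mul_assoc, ← mul_pow,
            prod_erase_mul _ _ hv]
      _ = p ^ (r - 1) * (ρ ^ (r - 1) * p) := by
          rw [← pow_sub_one_mul hr.ne' p]
          ring
  exact le_of_mul_le_mul_left key (pow_pos hp _)

/-- Raising the zero coordinates `Z` of an edge `e` to `τ` gains `r τ^{|Z|} ∏_{e \ Z} x` in the
tensor form at a cost of `|Z| τ^r` in the normalisation. -/
lemma mul_prod_sdiff_le (hr : 0 < r) (hF : IsUniform r F) (hx : IsPerronVector r F x)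
    {e Z : Finset (Fin n)} (he : e ∈ F) (hZe : Z ⊆ e) (hZ : ∀ i ∈ Z, x i = 0)
    (hZne : Z.Nonempty) {τ : ℝ} (hτ : 0 ≤ τ) :
    r * (∏ i ∈ e \ Z, x i) * τ ^ Z.card ≤ specRad r F * Z.card * τ ^ r := by
  classical
  set z : Fin n → ℝ := fun i => if i ∈ Z then τ else x i
  have hxz : ∀ i, x i ≤ z i := fun i => by
    by_cases hi : i ∈ Z <;> simp [z, hi, hZ i, hτ]
  have hz : ∀ i, 0 ≤ z i := fun i => (hx.mem.1 i).trans (hxz i)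
  have hsum : ∑ i, z i ^ r = 1 + Z.card * τ ^ r := by
    have h : ∀ i, z i ^ r = x i ^ r + if i ∈ Z then τ ^ r else 0 := fun i => by
      by_cases hi : i ∈ Z <;> simp [z, hi, hZ i, zero_pow hr.ne']
    simp only [h, sum_add_distrib, sum_ite_mem, univ_inter, sum_const, nsmul_eq_mul, hx.mem.2]
  have hprod : ∏ i ∈ e, z i = τ ^ Z.card * ∏ i ∈ e \ Z, x i := by
    have hout : ∏ i ∈ e \ Z, z i = ∏ i ∈ e \ Z, x i :=
      prod_congr rfl fun i hi => if_neg (Finset.mem_sdiff.1 hi).2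
    have hin : ∏ i ∈ Z, z i = τ ^ Z.card := by
      rw [prod_congr rfl fun i hi => if_pos hi, prod_const]
    rw [← prod_sdiff hZe, hout, hin, mul_comm]
  have hx0 : ∏ i ∈ e, x i = 0 := by
    obtain ⟨i, hi⟩ := hZne
    exact prod_eq_zero (hZe hi) (hZ i hi)
  have hgain : tensorForm r F x + r * (τ ^ Z.card * ∏ i ∈ e \ Z, x i) ≤ tensorForm r F z := by
    unfold tensorForm
    rw [← add_sum_erase _ _ he, ← add_sum_erase _ _ he, hx0, hprod, zero_add, mul_add,
      add_comm]
    exact add_le_add le_rfl <| mul_le_mul_of_nonneg_left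
      (sum_le_sum fun f _ => prod_le_prod (fun i _ => hx.mem.1 i) fun i _ => hxz i)
      (by positivity)
  have := hgain.trans (hF.tensorForm_le_specRad_mul hr hz)
  rw [hsum, hx.tensorForm_eq] at this
  linarith

lemma pos_of_mem (hr : 0 < r) (hF : IsUniform r F) (hx : IsPerronVector r F x)
    {e : Finset (Fin n)} (he : e ∈ F) {v : Fin n} (hv : v ∈ e) (hxv : 0 < x v)
    {j : Fin n} (hj : j ∈ e) : 0 < x j := by
  classical
  refine (hx.mem.1 j).lt_of_ne fun hxj => ?_
  set Z := e.filter (x · = 0)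
  set π := ∏ i ∈ e \ Z, x i
  have hZne : Z.Nonempty := ⟨j, mem_filter.2 ⟨hj, hxj.symm⟩⟩
  have hZr : Z.card < r := hF e he ▸ card_lt_card (filter_ssubset.2 ⟨v, hv, hxv.ne'⟩)
  have hπ : 0 < π := prod_pos fun i hi => by
    obtain ⟨hie, hiZ⟩ := Finset.mem_sdiff.1 hi
    exact (hx.mem.1 i).lt_of_ne fun h => hiZ (mem_filter.2 ⟨hie, h.symm⟩)
  -- dividing by `τ ^ |Z|`, the gain `r π` is dominated by `ρ |Z| τ ^ (r - |Z|) → 0`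
  have hbound : ∀ τ : ℝ, 0 < τ → r * π ≤ specRad r F * Z.card * τ ^ (r - Z.card) := by
    intro τ hτ
    have := hx.mul_prod_sdiff_le hr hF he (filter_subset _ e) (fun i hi => (mem_filter.1 hi).2)
      hZne hτ.le
    rw [← pow_sub_mul_pow τ hZr.le, ← mul_assoc] at this
    exact le_of_mul_le_mul_right this (pow_pos hτ _)
  have hlim : Tendsto (fun τ : ℝ => specRad r F * Z.card * τ ^ (r - Z.card)) (𝓝[>] 0) (𝓝 0) := by
    have := ((continuous_pow (r - Z.card)).const_mul (specRad r F * Z.card)).tendsto' 0 0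
      (by simp [(Nat.sub_pos_of_lt hZr).ne'])
    exact this.mono_left nhdsWithin_le_nhds
  have := ge_of_tendsto hlim (eventually_nhdsWithin_of_forall hbound)
  have : (0 : ℝ) < r * π := mul_pos (by exact_mod_cast hr) hπ
  linarith

lemma pow_le_of_hconn (hr : 0 < r) (hF : IsUniform r F) (hx : IsPerronVector r F x) :
    ∀ {m : ℕ} {u a : Fin n}, hconn F m u a → 0 < x u →
      x u ^ r ≤ specRad r F ^ (r * m) * x a ^ r
  | 0, u, a, h, _ => by rw [show u = a from h, mul_zero, pow_zero, one_mul]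
  | m + 1, u, a, ⟨e, he, w, hw, hu, h⟩, hxu => by
    set ρ := specRad r F
    have hρ : 0 ≤ ρ := specRad_nonneg
    have hpos : ∀ i ∈ e, 0 < x i := fun i hi => hx.pos_of_mem hr hF he hu hxu hi
    have ih := hx.pow_le_of_hconn hr hF h (hpos w hw)
    calc x u ^ r ≤ ρ ^ (r - 1) * ∏ i ∈ e, x i := hx.pow_le_mul_prod hr hF he hpos hu
      _ ≤ ρ ^ (r - 1) * (ρ * x w ^ r) :=
        mul_le_mul_of_nonneg_left (hx.prod_le hr hF he hw) (pow_nonneg hρ _)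
      _ ≤ ρ ^ (r - 1) * (ρ * (ρ ^ (r * m) * x a ^ r)) :=
        mul_le_mul_of_nonneg_left (mul_le_mul_of_nonneg_left ih hρ) (pow_nonneg hρ _)
      _ = ρ ^ (r * (m + 1)) * x a ^ r := by
        rw [mul_add, mul_one, pow_add, ← pow_sub_one_mul hr.ne' ρ]
        ring

lemma pos (hr : 0 < r) (hF : IsUniform r F) (hc : HConnected F) (hx : IsPerronVector r F x)
    (u : Fin n) : 0 < x u := by
  obtain ⟨w, hw⟩ : ∃ w, x w ≠ 0 := by
    by_contra! h
    simpa [h, zero_pow hr.ne'] using hx.mem.2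
  obtain ⟨m, hm⟩ := hc w u
  have := hx.pow_le_of_hconn hr hF hm ((hx.mem.1 w).lt_of_ne' hw)
  refine (hx.mem.1 u).lt_of_ne fun hu => ?_
  rw [← hu, zero_pow hr.ne', mul_zero] at this
  exact hw (pow_eq_zero_iff hr.ne' |>.mp (le_antisymm this (pow_nonneg (hx.mem.1 w) r)))

end IsPerronVector

section Walks

variable {n : ℕ} {E : Finset (Finset (Fin n))}

lemma hdist_le_hdiam (E : Finset (Finset (Fin n))) (u v : Fin n) : hdist E u v ≤ hdiam E := by
  have hfin : {d | ∃ u v : Fin n, hdist E u v = d}.Finite :=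
    (Set.finite_range fun p : Fin n × Fin n => hdist E p.1 p.2).subset
      fun _ ⟨u, v, h⟩ => ⟨(u, v), h⟩
  exact le_csSup hfin.bddAbove ⟨u, v, rfl⟩

lemma hconn_erase_of_forall_lt {e₀ : Finset (Fin n)} :
    ∀ {k : ℕ} {w a : Fin n}, hconn E k w a → (∀ j < k, ∀ b ∈ e₀, ¬ hconn E j w b) →
      hconn (E.erase e₀) k w a
  | 0, _, _, h, _ => h
  | k + 1, w, _, ⟨e, he, w', hw', hwe, h⟩, hmin => by
    refine ⟨e, mem_erase.2 ⟨?_, he⟩, w', hw', hwe, hconn_erase_of_forall_lt h ?_⟩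
    · rintro rfl
      exact hmin 0 k.succ_pos w hwe rfl
    · intro j hj b hb hjb
      exact hmin (j + 1) (by omega) b hb ⟨e, he, w', hw', hwe, hjb⟩

lemma exists_hconn_erase_le_hdiam (hc : HConnected E) {e₀ : Finset (Fin n)} {a : Fin n}
    (ha : a ∈ e₀) (w : Fin n) : ∃ b ∈ e₀, ∃ k ≤ hdiam E, hconn (E.erase e₀) k w b := by
  classical
  have hex : ∃ k, ∃ b ∈ e₀, hconn E k w b := ⟨_, a, ha, (hc w a).choose_spec⟩
  obtain ⟨b, hb, hk⟩ := Nat.find_spec hex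
  refine ⟨b, hb, Nat.find hex, ?_,
    hconn_erase_of_forall_lt hk fun j hj b' hb' h => Nat.find_min hex hj ⟨b', hb', h⟩⟩
  calc Nat.find hex ≤ hdist E w b := Nat.find_min' hex ⟨b, hb, Nat.sInf_mem (hc w b)⟩
    _ ≤ hdiam E := hdist_le_hdiam E w b

end Walks

lemma card_mul_prod_le_sum_pow {ι : Type*} {s : Finset ι} {t : ι → ℝ} (ht : ∀ i ∈ s, 0 ≤ t i) :
    s.card * ∏ i ∈ s, t i ≤ ∑ i ∈ s, t i ^ s.card := by
  rcases s.eq_empty_or_nonempty with rfl | hs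
  · simp
  have hk : (s.card : ℝ) ≠ 0 := by exact_mod_cast hs.card_pos.ne'
  have hamgm := Real.geom_mean_le_arith_mean_weighted s (fun _ => (s.card : ℝ)⁻¹)
    (fun i => t i ^ s.card) (fun _ _ => by positivity)
    (by rw [sum_const, nsmul_eq_mul, mul_inv_cancel₀ hk]) fun i hi => pow_nonneg (ht i hi) _
  rw [prod_congr rfl fun i hi => Real.pow_rpow_inv_natCast (ht i hi) hs.card_pos.ne',
    ← mul_sum] at hamgm
  calc s.card * ∏ i ∈ s, t i ≤ s.card * ((s.card : ℝ)⁻¹ * ∑ i ∈ s, t i ^ s.card) :=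
        mul_le_mul_of_nonneg_left hamgm (by positivity)
    _ = ∑ i ∈ s, t i ^ s.card := by field_simp

section Gap

variable {n r : ℕ} {E F : Finset (Finset (Fin n))}

lemma IsUniform.tensorForm_mul_le (hF : IsUniform r F) {y t : Fin n → ℝ}
    (hy : ∀ i, 0 ≤ y i) (ht : ∀ i, 0 ≤ t i) :
    tensorForm r F (fun i => y i * t i) ≤ ∑ f ∈ F, (∏ i ∈ f, y i) * ∑ j ∈ f, t j ^ r := by
  unfold tensorForm
  rw [mul_sum]
  refine sum_le_sum fun f hf => ?_
  have hamgm := card_mul_prod_le_sum_pow fun i (_ : i ∈ f) => ht i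
  rw [hF f hf] at hamgm
  rw [prod_mul_distrib, mul_left_comm]
  exact mul_le_mul_of_nonneg_left hamgm (prod_nonneg fun i _ => hy i)

lemma sum_prod_mul_sum_eq (F : Finset (Finset (Fin n))) (y t : Fin n → ℝ) :
    ∑ f ∈ F, (∏ i ∈ f, y i) * ∑ j ∈ f, t j = ∑ j, t j * ∑ f ∈ F with j ∈ f, ∏ i ∈ f, y i := by
  simp_rw [mul_sum]
  rw [sum_comm' (t' := univ) (s' := fun j => {f ∈ F | j ∈ f}) fun f j => by simp [and_comm]]
  exact sum_congr rfl fun j _ => sum_congr rfl fun f _ => mul_comm _ _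

lemma IsUniform.tensorForm_erase_le (hr : 0 < r) (hE : IsUniform r E) (hc : HConnected E)
    {e₀ : Finset (Fin n)} (he₀ : e₀ ∈ E) {z : Fin n → ℝ} (hz : z ∈ nonnegSphere n r) :
    tensorForm r (E.erase e₀) z ≤ specRad r E - (∑ j ∈ e₀, z j ^ r) / specRad r E ^ (r - 1) := by
  obtain ⟨a₀, -⟩ := hE.nonempty_of_mem hr he₀
  obtain ⟨y, hy⟩ := exists_isPerronVector hr a₀.pos E
  have hypos := hy.pos hr hE hc
  set ρ := specRad r E
  have hρ : 0 < ρ := one_pos.trans_le (hE.one_le_specRad hr he₀)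
  set t : Fin n → ℝ := fun i => z i / y i
  have ht : ∀ i, 0 ≤ t i := fun i => div_nonneg (hz.1 i) (hypos i).le
  have hzt : z = fun i => y i * t i := funext fun i => (mul_div_cancel₀ _ (hypos i).ne').symm
  have hztr : ∀ j, t j ^ r * y j ^ r = z j ^ r := fun j => by rw [hzt, mul_comm, ← mul_pow]
  have htotal : ∑ f ∈ E, (∏ i ∈ f, y i) * ∑ j ∈ f, t j ^ r = ρ := by
    rw [sum_prod_mul_sum_eq, ← mul_one ρ, ← hz.2, mul_sum]
    exact sum_congr rfl fun j _ => by rw [hy.sum_filter_prod_eq hr hE, ← hztr]; ring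
  have hdeficit : (∑ j ∈ e₀, z j ^ r) / ρ ^ (r - 1) ≤ (∏ i ∈ e₀, y i) * ∑ j ∈ e₀, t j ^ r := by
    rw [div_le_iff₀ (pow_pos hρ _), mul_sum, sum_mul]
    refine sum_le_sum fun j hj => ?_
    rw [← hztr, mul_comm _ (t j ^ r), mul_assoc, mul_comm _ (ρ ^ (r - 1))]
    exact mul_le_mul_of_nonneg_left
      (hy.pow_le_mul_prod hr hE he₀ (fun i _ => hypos i) hj) (pow_nonneg (ht j) r)
  calc tensorForm r (E.erase e₀) z
      ≤ ∑ f ∈ E.erase e₀, (∏ i ∈ f, y i) * ∑ j ∈ f, t j ^ r :=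
        hzt ▸ (hE.mono (erase_subset e₀ E)).tensorForm_mul_le (fun i => (hypos i).le) ht
    _ = ρ - (∏ i ∈ e₀, y i) * ∑ j ∈ e₀, t j ^ r := by rw [sum_erase_eq_sub he₀, htotal]
    _ ≤ ρ - (∑ j ∈ e₀, z j ^ r) / ρ ^ (r - 1) := sub_le_sub_left hdeficit ρ

lemma IsUniform.one_div_le_specRad_sub_specRad_erase (hr : 0 < r) (hE : IsUniform r E)
    (hc : HConnected E) {e₀ : Finset (Fin n)} (he₀ : e₀ ∈ E) :
    1 / (n * specRad r E ^ (r * hdiam E) * specRad r E ^ (r - 1)) ≤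
      specRad r E - specRad r (E.erase e₀) := by
  obtain ⟨a₀, ha₀⟩ := hE.nonempty_of_mem hr he₀
  have hn : 0 < n := a₀.pos
  set ρ := specRad r E
  have hρ : 1 ≤ ρ := hE.one_le_specRad hr he₀
  have hE' := hE.mono (erase_subset e₀ E)
  obtain ⟨x, hx⟩ := exists_isPerronVector hr hn (E.erase e₀)
  obtain ⟨w, -, hw⟩ := exists_le_of_sum_le (s := univ) (f := fun _ => (1 : ℝ) / n)
    (g := fun i => x i ^ r) ⟨a₀, mem_univ a₀⟩ (by simp [hx.mem.2, hn.ne'])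
  obtain ⟨a, ha, k, hkD, hwalk⟩ := exists_hconn_erase_le_hdiam hc ha₀ w
  have hxw : 0 < x w := (hx.mem.1 w).lt_of_ne fun h => by
    rw [← h, zero_pow hr.ne'] at hw
    exact (one_div_pos.2 (Nat.cast_pos.2 hn)).not_ge hw
  have hdecay : 1 / n ≤ ρ ^ (r * hdiam E) * x a ^ r := calc
    (1 : ℝ) / n ≤ specRad r (E.erase e₀) ^ (r * k) * x a ^ r :=
      hw.trans (hx.pow_le_of_hconn hr hE' hwalk hxw)
    _ ≤ ρ ^ (r * hdiam E) * x a ^ r := by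
      refine mul_le_mul_of_nonneg_right ?_ (pow_nonneg (hx.mem.1 a) r)
      exact (pow_le_pow_left₀ specRad_nonneg (specRad_mono hr (erase_subset e₀ E)) _).trans
        (pow_le_pow_right₀ hρ (Nat.mul_le_mul_left r hkD))
  have hupper := hE.tensorForm_erase_le hr hc he₀ hx.mem
  rw [hx.tensorForm_eq] at hupper
  have hxa : x a ^ r ≤ ∑ j ∈ e₀, x j ^ r :=
    single_le_sum (fun j _ => pow_nonneg (hx.mem.1 j) r) ha
  have hρpos : 0 < ρ := one_pos.trans_le hρ
  calc 1 / (n * ρ ^ (r * hdiam E) * ρ ^ (r - 1)) = 1 / n / ρ ^ (r * hdiam E) / ρ ^ (r - 1) := by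
        rw [div_div, div_div, mul_assoc]
    _ ≤ x a ^ r / ρ ^ (r - 1) := by
        gcongr
        rwa [div_le_iff₀' (by positivity)]
    _ ≤ (∑ j ∈ e₀, x j ^ r) / ρ ^ (r - 1) := by gcongr
    _ ≤ ρ - specRad r (E.erase e₀) := by linarith

end Gap

theorem stmt_19 (n r : ℕ) (hr : 2 ≤ r) (E : Finset (Finset (Fin n)))
    (hu : ∀ e ∈ E, e.card = r) (hc : HConnected E) (D : ℕ) (hD : hdiam E = D)
    (E' : Finset (Finset (Fin n))) (hsub : E' ⊆ E) (hne : E' ≠ E) :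
    specRad r E - specRad r E' ≥
      min ((r : ℝ) / (n * specRad r E ^ (r * (r - 1) * (D + 1))))
        (1 / (n * specRad r E ^ (r * D) * (specRad r E ^ (r - 1) + (r : ℝ) - 1))) := by
  have hr0 : 0 < r := by omega
  obtain ⟨e₀, he₀, he₀'⟩ : ∃ e ∈ E, e ∉ E' := not_subset.1 fun h => hne (hsub.antisymm h)
  have hρ : 1 ≤ specRad r E := IsUniform.one_le_specRad hr0 hu he₀
  have hgap := IsUniform.one_div_le_specRad_sub_specRad_erase hr0 hu hc he₀
  have hmono : specRad r E' ≤ specRad r (E.erase e₀) :=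
    specRad_mono hr0 (subset_erase.2 ⟨hsub, he₀'⟩)
  rw [hD] at hgap
  obtain ⟨a₀, -⟩ := IsUniform.nonempty_of_mem hr0 hu he₀
  have hn : (0 : ℝ) < n := by exact_mod_cast a₀.pos
  have hr1 : (1 : ℝ) ≤ r := by exact_mod_cast hr0
  refine ge_iff_le.2 ((min_le_right _ _).trans ?_)
  calc 1 / (n * specRad r E ^ (r * D) * (specRad r E ^ (r - 1) + r - 1))
      ≤ 1 / (n * specRad r E ^ (r * D) * specRad r E ^ (r - 1)) := by
        refine one_div_le_one_div_of_le (by positivity) ?_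
        gcongr
        linarith
    _ ≤ specRad r E - specRad r E' := by linarith
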